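/- arXiv:1803.07966 — 2 statements merged into one kernel-verified Lean document; each statement's English description precedes it below -/
import Mathlib

section
/- Let P_1, …, P_K be probability measures each satisfying the support condition (P_k(A) = 0 implies h = 0 on A, Q-a.s.), let N_1, …, N_K be sample counts with N = ∑_k N_k, and let X_n^k ~ P_k be independent samples. Suppose the re-weighting functions w_k : Ω → ℝ satisfy: whenever h(x) ≠ 0, (1/N) ∑_{k=1}^K N_k w_k(x) = 1. Then the multiple importance sampling estimator (1/N) ∑_{k=1}^K ∑_{n=1}^{N_k} h(X_n^k)·(dQ/dP_k)(X_n^k)·w_k(X_n^k) is an unbiased estimator of E_Q[h(X)]. -/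
open MeasureTheory ProbabilityTheory Filter
open scoped ENNReal BigOperators

section Aux

variable {Ω : Type*} [MeasurableSpace Ω]

/-- On the singular part of `Q` w.r.t. `P k`, `h` vanishes a.e. -/
lemma aux_h_zero_singular (Q : Measure Ω) [IsFiniteMeasure Q]
    (Pk : Measure Ω) [IsFiniteMeasure Pk] (h : Ω → ℝ)
    (hsupp : ∀ A : Set Ω, MeasurableSet A → Pk A = 0 →
      ∀ᵐ x ∂Q, x ∈ A → h x = 0) :
    ∀ᵐ x ∂(Q.singularPart Pk), h x = 0 := by
  obtain ⟨s, hs, hQs, hPs⟩ := Measure.mutuallySingular_singularPart Q Pk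
  have hA : ∀ᵐ x ∂Q, x ∈ sᶜ → h x = 0 := hsupp sᶜ hs.compl hPs
  have hle : Q.singularPart Pk ≪ Q :=
    Measure.absolutelyContinuous_of_le (Measure.singularPart_le Q Pk)
  have hA' : ∀ᵐ x ∂(Q.singularPart Pk), x ∈ sᶜ → h x = 0 := hle.ae_le hA
  have hmem : ∀ᵐ x ∂(Q.singularPart Pk), x ∈ sᶜ := by
    rw [ae_iff]
    simpa [hs] using hQs
  filter_upwards [hA', hmem] with x h1 h2 using h1 h2

/-- The key identity: the reweighted importance-sampling integrand integrates
to `∫ h·w dQ`. -/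
lemma aux_key (Q : Measure Ω) [IsFiniteMeasure Q]
    (Pk : Measure Ω) [IsFiniteMeasure Pk] (h wk : Ω → ℝ)
    (hsupp : ∀ A : Set Ω, MeasurableSet A → Pk A = 0 →
      ∀ᵐ x ∂Q, x ∈ A → h x = 0) :
    ∫ x, h x * (Q.rnDeriv Pk x).toReal * wk x ∂Pk = ∫ x, h x * wk x ∂Q := by
  set Qwd : Measure Ω := Pk.withDensity (Q.rnDeriv Pk) with hQwd
  have hac : Qwd ≪ Pk := withDensity_absolutelyContinuous _ _
  have hrd : Qwd.rnDeriv Pk =ᵐ[Pk] Q.rnDeriv Pk :=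
    Measure.rnDeriv_withDensity Pk (Measure.measurable_rnDeriv Q Pk)
  have h1 : ∫ x, h x * (Q.rnDeriv Pk x).toReal * wk x ∂Pk
      = ∫ x, (Qwd.rnDeriv Pk x).toReal • (h x * wk x) ∂Pk := by
    refine integral_congr_ae ?_
    filter_upwards [hrd] with x hx
    rw [hx]; simp [smul_eq_mul]; ring
  have h2 : ∫ x, (Qwd.rnDeriv Pk x).toReal • (h x * wk x) ∂Pk
      = ∫ x, h x * wk x ∂Qwd := integral_rnDeriv_smul hac
  have hdec : Q = Q.singularPart Pk + Qwd :=
    (Q.singularPart_add_rnDeriv Pk).symm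
  have hz : ∀ᵐ x ∂(Q.singularPart Pk), h x * wk x = 0 := by
    filter_upwards [aux_h_zero_singular Q Pk h hsupp] with x hx
    simp [hx]
  have h3 : ∫ x, h x * wk x ∂Q = ∫ x, h x * wk x ∂Qwd := by
    conv_lhs => rw [hdec]
    by_cases hI : Integrable (fun x => h x * wk x) Qwd
    · rw [integral_add_measure ?_ hI, integral_eq_zero_of_ae hz, zero_add]
      exact (integrable_zero _ _ _).congr (hz.mono fun x hx => hx.symm)
    · rw [integral_undef hI, integral_undef]
      intro hI'
      exact hI (hI'.right_of_add_measure)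
  rw [h1, h2, h3]

/-- Integrability of `h·w` with respect to `Q`. -/
lemma aux_int (Q : Measure Ω) [IsFiniteMeasure Q]
    (Pk : Measure Ω) [IsFiniteMeasure Pk] (h wk : Ω → ℝ)
    (hsupp : ∀ A : Set Ω, MeasurableSet A → Pk A = 0 →
      ∀ᵐ x ∂Q, x ∈ A → h x = 0)
    (hmeas : Measurable h) (hwk : Measurable wk)
    (hint : Integrable (fun x => h x * (Q.rnDeriv Pk x).toReal * wk x) Pk) :
    Integrable (fun x => h x * wk x) Q := by
  set Qwd : Measure Ω := Pk.withDensity (Q.rnDeriv Pk) with hQwd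
  have hac : Qwd ≪ Pk := withDensity_absolutelyContinuous _ _
  have hrd : Qwd.rnDeriv Pk =ᵐ[Pk] Q.rnDeriv Pk :=
    Measure.rnDeriv_withDensity Pk (Measure.measurable_rnDeriv Q Pk)
  have hIwd : Integrable (fun x => h x * wk x) Qwd := by
    rw [← integrable_rnDeriv_smul_iff hac]
    refine hint.congr ?_
    filter_upwards [hrd] with x hx
    rw [hx]; simp [smul_eq_mul]; ring
  have hz : ∀ᵐ x ∂(Q.singularPart Pk), h x * wk x = 0 := by
    filter_upwards [aux_h_zero_singular Q Pk h hsupp] with x hx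
    simp [hx]
  have hIs : Integrable (fun x => h x * wk x) (Q.singularPart Pk) :=
    (integrable_zero _ _ _).congr (hz.mono fun x hx => hx.symm)
  have hdec : Q = Q.singularPart Pk + Qwd := (Q.singularPart_add_rnDeriv Pk).symm
  rw [hdec]
  exact hIs.add_measure hIwd

end Aux

/-- The multiple importance sampling estimator is unbiased whenever the
re-weighting functions satisfy the normalization condition on `{h ≠ 0}`. -/
theorem mis_unbiased
    {Ω Ω' : Type*} [MeasurableSpace Ω] [MeasurableSpace Ω']
    (Q : Measure Ω) [IsProbabilityMeasure Q]
    (h : Ω → ℝ) (hmeas : Measurable h) (hint : Integrable h Q)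
    (K : ℕ) (hK : 0 < K)
    (P : Fin K → Measure Ω) (hP : ∀ k, IsProbabilityMeasure (P k))
    (hsupp : ∀ k, ∀ A : Set Ω, MeasurableSet A → P k A = 0 →
      ∀ᵐ x ∂Q, x ∈ A → h x = 0)
    (Nk : Fin K → ℕ) (hNk : ∀ k, 0 < Nk k)
    (N : ℕ) (hN : N = ∑ k, Nk k)
    (w : Fin K → Ω → ℝ) (hw : ∀ k, Measurable (w k))
    (hnorm : ∀ x, h x ≠ 0 → (N : ℝ)⁻¹ * ∑ k, (Nk k : ℝ) * w k x = 1)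
    (μ : Measure Ω') [IsProbabilityMeasure μ]
    (X : (k : Fin K) → Fin (Nk k) → Ω' → Ω)
    (hXmeas : ∀ k n, Measurable (X k n))
    (hlaw : ∀ k n, Measure.map (X k n) μ = P k)
    (hint' : ∀ k, Integrable
      (fun x => h x * (Q.rnDeriv (P k) x).toReal * w k x) (P k)) :
    ∫ ω, (N : ℝ)⁻¹ * ∑ k, ∑ n,
        h (X k n ω) * (Q.rnDeriv (P k) (X k n ω)).toReal * w k (X k n ω) ∂μ
      = ∫ x, h x ∂Q := by
  haveI := fun k => hP k
  set f : Fin K → Ω → ℝ :=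
    fun k x => h x * (Q.rnDeriv (P k) x).toReal * w k x with hf
  have hfmeas : ∀ k, Measurable (f k) := fun k =>
    ((hmeas.mul ((Measure.measurable_rnDeriv Q (P k)).ennreal_toReal)).mul (hw k))
  have hNpos : 0 < N := by
    rw [hN]
    exact Finset.sum_pos (fun k _ => hNk k) ⟨⟨0, hK⟩, Finset.mem_univ _⟩
  have hNne : (N : ℝ) ≠ 0 := Nat.cast_ne_zero.mpr hNpos.ne'
  -- integrability of composed functions
  have hcomp : ∀ k n, Integrable (fun ω => f k (X k n ω)) μ := by
    intro k n
    have h1 : Integrable (f k) (Measure.map (X k n) μ) := by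
      rw [hlaw k n]; exact hint' k
    exact (integrable_map_measure ((hfmeas k).aestronglyMeasurable)
      (hXmeas k n).aemeasurable).mp h1
  -- step 1: pull out the constant and the sums
  have step1 : ∫ ω, (N : ℝ)⁻¹ * ∑ k, ∑ n, f k (X k n ω) ∂μ
      = (N : ℝ)⁻¹ * ∑ k, ∑ n, ∫ ω, f k (X k n ω) ∂μ := by
    rw [integral_const_mul]
    congr 1
    rw [integral_finset_sum _ (fun k _ => integrable_finset_sum _ (fun n _ => hcomp k n))]
    exact Finset.sum_congr rfl fun k _ =>
      integral_finset_sum _ (fun n _ => hcomp k n)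
  -- step 2: each inner integral equals ∫ f k dP k
  have step2 : ∀ k n, ∫ ω, f k (X k n ω) ∂μ = ∫ x, f k x ∂(P k) := by
    intro k n
    rw [← hlaw k n]
    exact (integral_map (hXmeas k n).aemeasurable
      ((hfmeas k).aestronglyMeasurable)).symm
  -- step 3: key identity
  have step3 : ∀ k, ∫ x, f k x ∂(P k) = ∫ x, h x * w k x ∂Q := fun k =>
    aux_key Q (P k) h (w k) (hsupp k)
  have hIk : ∀ k, Integrable (fun x => h x * w k x) Q := fun k =>
    aux_int Q (P k) h (w k) (hsupp k) hmeas (hw k) (hint' k)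
  calc ∫ ω, (N : ℝ)⁻¹ * ∑ k, ∑ n, f k (X k n ω) ∂μ
      = (N : ℝ)⁻¹ * ∑ k, ∑ n, ∫ ω, f k (X k n ω) ∂μ := step1
    _ = (N : ℝ)⁻¹ * ∑ k, (Nk k : ℝ) * ∫ x, h x * w k x ∂Q := by
        congr 1
        refine Finset.sum_congr rfl fun k _ => ?_
        rw [Finset.sum_congr rfl fun n _ => (step2 k n).trans (step3 k)]
        simp [Finset.sum_const, nsmul_eq_mul]
    _ = (N : ℝ)⁻¹ * ∫ x, ∑ k, (Nk k : ℝ) * (h x * w k x) ∂Q := by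
        rw [integral_finset_sum _ (fun k _ => (hIk k).const_mul _)]
        simp_rw [integral_const_mul]
    _ = (N : ℝ)⁻¹ * ∫ x, (N : ℝ) * h x ∂Q := by
        congr 1
        refine integral_congr_ae (Eventually.of_forall fun x => ?_)
        by_cases hx : h x = 0
        · simp [hx]
        · have := hnorm x hx
          have hS : ∑ k, (Nk k : ℝ) * w k x = N := by
            field_simp at this
            linarith [this]
          calc ∑ k, (Nk k : ℝ) * (h x * w k x)
              = h x * ∑ k, (Nk k : ℝ) * w k x := by
                rw [Finset.mul_sum]; exact Finset.sum_congr rfl fun k _ => by ring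
            _ = (N : ℝ) * h x := by rw [hS]; ring
    _ = ∫ x, h x ∂Q := by
        rw [integral_const_mul, ← mul_assoc, inv_mul_cancel₀ hNne, one_mul]
end

section
/- With q, h, p^u as in the Gaussian example, for every γ > 0, lim_{u→∞} P^u( h(X)·q(X)/p^u(X) > γ ) = 0, where X ~ p^u. Consequently, taking u_k = k and one sample X^k ~ P^{u_k} per iteration, the flat-AMIS estimator ψ̂_K = (1/K) ∑_{k=1}^K h(X^k) q(X^k)/p^{u_k}(X^k) converges to 0 in probability as K → ∞, and hence is not a consistent estimator of ψ = 1/√2. -/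
open MeasureTheory ProbabilityTheory Filter Real
open Set
open scoped ENNReal BigOperators Topology

/-!
The weight `h q / pᵘ` equals `exp (u²/2 - u x - x²/2) ≤ exp (u²/2 - u x)`, so it exceeds a
fixed level `γ` only on the left tail `x ≤ u/2 + |log γ|`, whose `N(u,1)`-mass is
`O(exp (-u/2))` by a Chernoff bound. Along `u_k = k + 1` these masses are summable for every `γ`,
so by Borel–Cantelli the weights `f(u_k, X^k)` tend to `0` almost surely, hence so do their
Cesàro means, although each weight has expectation `ψ = 1/√2`.
-/

/-- The weight `h q / pᵘ` of the Gaussian example, in closed form. -/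
noncomputable def amisWeight (u x : ℝ) : ℝ := exp (u ^ 2 / 2 - u * x - x ^ 2 / 2)

lemma amisWeight_eq_div (u x : ℝ) :
    exp (-x ^ 2 / 2) * ((√(2 * π))⁻¹ * exp (-x ^ 2 / 2)) /
      ((√(2 * π))⁻¹ * exp (-(x - u) ^ 2 / 2)) = amisWeight u x := by
  rw [amisWeight, div_eq_iff (by positivity), mul_left_comm, ← exp_add, mul_left_comm,
    ← exp_add]
  ring_nf

lemma amisWeight_pos (u x : ℝ) : 0 < amisWeight u x := exp_pos _

@[fun_prop]
lemma measurable_amisWeight (u : ℝ) : Measurable (amisWeight u) := by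
  unfold amisWeight
  fun_prop

lemma setOf_lt_amisWeight_subset {γ u : ℝ} (hγ : 0 < γ) (hu : 1 ≤ u) :
    {x | γ < amisWeight u x} ⊆ Iic (u / 2 + |log γ|) := by
  intro x hx
  have hlog : log γ < u ^ 2 / 2 - u * x - x ^ 2 / 2 := (log_lt_iff_lt_exp hγ).2 hx
  rw [mem_Iic]
  by_contra! hlt
  nlinarith [neg_abs_le (log γ), abs_nonneg (log γ), sq_nonneg x,
    mul_le_mul_of_nonneg_left hlt.le (zero_le_one.trans hu)]

lemma gaussianReal_Iic_le {m : ℝ} {v : NNReal} (a : ℝ) {t : ℝ} (ht : t ≤ 0) :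
    gaussianReal m v (Iic a) ≤ ENNReal.ofReal (exp (-t * a + (m * t + v * t ^ 2 / 2))) := by
  have h := measure_le_le_exp_mul_mgf (μ := gaussianReal m v) (X := id) a ht
    (integrable_exp_mul_gaussianReal t)
  rw [mgf_id_gaussianReal, ← exp_add] at h
  exact (ENNReal.le_ofReal_iff_toReal_le (measure_ne_top _ _) (exp_pos _).le).2 h

lemma gaussianReal_lt_amisWeight_le {γ u : ℝ} (hγ : 0 < γ) (hu : 1 ≤ u) :
    gaussianReal u 1 {x | γ < amisWeight u x} ≤
      ENNReal.ofReal (exp (|log γ| - (u - 1) / 2)) :=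
  calc gaussianReal u 1 {x | γ < amisWeight u x}
      ≤ gaussianReal u 1 (Iic (u / 2 + |log γ|)) :=
        measure_mono (setOf_lt_amisWeight_subset hγ hu)
    _ ≤ _ := (gaussianReal_Iic_le _ (by norm_num : (-1 : ℝ) ≤ 0)).trans_eq
        (by push_cast; ring_nf)

theorem tendsto_gaussianReal_lt_amisWeight {γ : ℝ} (hγ : 0 < γ) :
    Tendsto (fun u : ℝ => gaussianReal u 1 {x | γ < amisWeight u x}) atTop (𝓝 0) := by
  have hexponent : Tendsto (fun u : ℝ => |log γ| - (u - 1) / 2) atTop atBot :=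
    tendsto_atBot_add_const_left _ _ (tendsto_neg_atTop_atBot.comp
      ((tendsto_atTop_add_const_right _ _ tendsto_id).atTop_div_const two_pos))
  have hbound :
      Tendsto (fun u : ℝ => ENNReal.ofReal (exp (|log γ| - (u - 1) / 2))) atTop (𝓝 0) := by
    simpa using ENNReal.tendsto_ofReal (tendsto_exp_atBot.comp hexponent)
  refine tendsto_of_tendsto_of_tendsto_of_le_of_le' tendsto_const_nhds hbound
    (Eventually.of_forall fun _ => zero_le) ?_
  filter_upwards [eventually_ge_atTop 1] with u hu using gaussianReal_lt_amisWeight_le hγ hu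

lemma tsum_gaussianReal_lt_amisWeight_ne_top {γ : ℝ} (hγ : 0 < γ) :
    ∑' k : ℕ, gaussianReal ((k : ℝ) + 1) 1 {x | γ < amisWeight ((k : ℝ) + 1) x} ≠ ∞ := by
  have hsummable : Summable fun k : ℕ => exp (|log γ|) * exp (k * (-1 / 2)) :=
    (summable_exp_nat_mul_iff.2 (by norm_num)).mul_left _
  refine ne_top_of_le_ne_top (ENNReal.ofReal_tsum_of_nonneg (fun _ => by positivity) hsummable ▸
    ENNReal.ofReal_ne_top) (ENNReal.tsum_le_tsum fun k => ?_)
  refine (gaussianReal_lt_amisWeight_le hγ (by simp)).trans_eq ?_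
  rw [← exp_add]
  ring_nf

lemma ae_tendsto_zero_of_tsum_measure_lt_ne_top {Ω : Type*} [MeasurableSpace Ω] {μ : Measure Ω}
    {Y : ℕ → Ω → ℝ} (hY : ∀ k ω, 0 ≤ Y k ω) (hsum : ∀ γ > 0, ∑' k, μ {ω | γ < Y k ω} ≠ ∞) :
    ∀ᵐ ω ∂μ, Tendsto (fun k => Y k ω) atTop (𝓝 0) := by
  have hlevels : ∀ᵐ ω ∂μ, ∀ m : ℕ, ∀ᶠ k in atTop, Y k ω ≤ 1 / (m + 1) :=
    ae_all_iff.2 fun m => (ae_eventually_notMem (hsum _ (by positivity))).mono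
      fun ω h => h.mono fun k hk => not_lt.1 hk
  filter_upwards [hlevels] with ω hω
  refine tendsto_order.2 ⟨fun a ha => Eventually.of_forall fun k => ha.trans_le (hY k ω),
    fun a ha => ?_⟩
  obtain ⟨m, hm⟩ := exists_nat_one_div_lt ha
  exact (hω m).mono fun k hk => hk.trans_lt hm

theorem gaussian_counterexample_general
    {Ω' : Type*} [MeasurableSpace Ω'] (μ : Measure Ω') [IsProbabilityMeasure μ]
    (X : ℕ → Ω' → ℝ) (hXmeas : ∀ k, Measurable (X k))
    (hlaw : ∀ k : ℕ, Measure.map (X k) μ = gaussianReal ((k : ℝ) + 1) 1)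
    (f : ℝ → ℝ → ℝ)
    (hf : ∀ u x, f u x = Real.exp (-x ^ 2 / 2) *
        ((Real.sqrt (2 * π))⁻¹ * Real.exp (-x ^ 2 / 2)) /
        ((Real.sqrt (2 * π))⁻¹ * Real.exp (-(x - u) ^ 2 / 2))) :
    (∀ γ : ℝ, 0 < γ →
        Tendsto (fun u : ℝ => gaussianReal u 1 {x | γ < f u x}) atTop (𝓝 0)) ∧
    TendstoInMeasure μ
      (fun (K : ℕ) ω => (K : ℝ)⁻¹ * ∑ k ∈ Finset.range K, f ((k : ℝ) + 1) (X k ω))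
      atTop (fun _ => 0) ∧
    ¬ TendstoInMeasure μ
      (fun (K : ℕ) ω => (K : ℝ)⁻¹ * ∑ k ∈ Finset.range K, f ((k : ℝ) + 1) (X k ω))
      atTop (fun _ => (Real.sqrt 2)⁻¹) := by
  obtain rfl : f = amisWeight := funext₂ fun u x => (hf u x).trans (amisWeight_eq_div u x)
  have hweights :
      ∀ᵐ ω ∂μ, Tendsto (fun k : ℕ => amisWeight ((k : ℝ) + 1) (X k ω)) atTop (𝓝 0) :=
    ae_tendsto_zero_of_tsum_measure_lt_ne_top (fun _ _ => (amisWeight_pos _ _).le) fun γ hγ => by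
      simpa only [← hlaw, Measure.map_apply (hXmeas _) (measurableSet_lt measurable_const
        (measurable_amisWeight _)), preimage_ofPred_eq]
        using tsum_gaussianReal_lt_amisWeight_ne_top hγ
  have hmeans := tendstoInMeasure_of_tendsto_ae
    (fun K => (by fun_prop : Measurable _).aestronglyMeasurable)
    (hweights.mono fun _ h => h.cesaro)
  refine ⟨fun γ hγ => tendsto_gaussianReal_lt_amisWeight hγ, hmeans, fun hψ => ?_⟩
  obtain ⟨ω, hω⟩ := (tendstoInMeasure_ae_unique hmeans hψ).exists
  exact (inv_pos.2 (sqrt_pos.2 two_pos)).ne hω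

/-- Counterexample: with drifting Gaussian proposals `u_k = k`, the weighted
integrand goes to `0` in probability as `u → ∞`; consequently the flat-AMIS
estimator converges to `0` in probability and is not consistent for `1/√2`. -/
theorem gaussian_counterexample
    {Ω' : Type*} [MeasurableSpace Ω'] (μ : Measure Ω') [IsProbabilityMeasure μ]
    (X : ℕ → Ω' → ℝ) (hXmeas : ∀ k, Measurable (X k))
    (hindep : iIndepFun X μ)
    (hlaw : ∀ k : ℕ, Measure.map (X k) μ = gaussianReal ((k : ℝ) + 1) 1)
    (f : ℝ → ℝ → ℝ)
    (hf : ∀ u x, f u x = Real.exp (-x ^ 2 / 2) *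
        ((Real.sqrt (2 * π))⁻¹ * Real.exp (-x ^ 2 / 2)) /
        ((Real.sqrt (2 * π))⁻¹ * Real.exp (-(x - u) ^ 2 / 2))) :
    (∀ γ : ℝ, 0 < γ →
        Tendsto (fun u : ℝ => gaussianReal u 1 {x | γ < f u x}) atTop (𝓝 0)) ∧
    TendstoInMeasure μ
      (fun (K : ℕ) ω => (K : ℝ)⁻¹ * ∑ k ∈ Finset.range K, f ((k : ℝ) + 1) (X k ω))
      atTop (fun _ => 0) ∧
    ¬ TendstoInMeasure μ
      (fun (K : ℕ) ω => (K : ℝ)⁻¹ * ∑ k ∈ Finset.range K, f ((k : ℝ) + 1) (X k ω))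
      atTop (fun _ => (Real.sqrt 2)⁻¹) :=
  gaussian_counterexample_general μ X hXmeas hlaw f hf
end
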